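/- arXiv:1505.04338 — 7 statements merged into one kernel-verified Lean document; each statement's English description precedes it below -/
import Mathlib

section
/- Let F, G : ℂ → ℂ be complex-differentiable at a point z ∈ ℂ. For a real-differentiable function h : ℂ → ℝ write ∂ₓh(z) and ∂_yh(z) for the real directional derivatives of h at z in the directions 1 and i. Then the Jacobian determinant of the map w ↦ (Re F(w), Re G(w)) equals the Jacobian determinant of the map w ↦ (Im F(w), Im G(w)) at z; explicitly, (∂ₓ(Re∘F))·(∂_y(Re∘G)) − (∂_y(Re∘F))·(∂ₓ(Re∘G)) = (∂ₓ(Im∘F))·(∂_y(Im∘G)) − (∂_y(Im∘F))·(∂ₓ(Im∘G)) at z, and both sides equal Im(F′(z) · conj(G′(z))). -/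
open Complex ComplexConjugate

section RealPartsOfHolomorphic

variable {E : Type*} [NormedAddCommGroup E] [NormedSpace ℂ E] {F : E → ℂ} {z : E}

theorem DifferentiableAt.fderiv_re_apply (hF : DifferentiableAt ℂ F z) (v : E) :
    fderiv ℝ (fun w => (F w).re) z v = (fderiv ℂ F z v).re :=
  congrArg (· v) (reCLM.hasFDerivAt.comp z (hF.hasFDerivAt.restrictScalars ℝ)).fderiv

theorem DifferentiableAt.fderiv_im_apply (hF : DifferentiableAt ℂ F z) (v : E) :
    fderiv ℝ (fun w => (F w).im) z v = (fderiv ℂ F z v).im :=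
  congrArg (· v) (imCLM.hasFDerivAt.comp z (hF.hasFDerivAt.restrictScalars ℝ)).fderiv

end RealPartsOfHolomorphic

theorem re_mul_re_mul_I_sub_re_mul_I_mul_re (a b : ℂ) :
    a.re * (b * I).re - (a * I).re * b.re = (a * conj b).im := by
  simp only [mul_re, mul_im, I_re, I_im, conj_re, conj_im]
  ring

theorem im_mul_im_mul_I_sub_im_mul_I_mul_im (a b : ℂ) :
    a.im * (b * I).im - (a * I).im * b.im = (a * conj b).im := by
  simp only [mul_im, I_re, I_im, conj_re, conj_im]
  ring

/-- For `F, G : ℂ → ℂ` complex-differentiable at `z`, the Jacobian determinant of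
`w ↦ (Re F w, Re G w)` equals that of `w ↦ (Im F w, Im G w)` at `z`, and both equal
`Im (F'(z) * conj (G'(z)))`. Here the real directional derivatives in the directions
`1` and `I` are expressed via `fderiv ℝ`. -/
theorem jacobian_re_eq_jacobian_im (F G : ℂ → ℂ) (z : ℂ)
    (hF : DifferentiableAt ℂ F z) (hG : DifferentiableAt ℂ G z) :
    (fderiv ℝ (fun w => (F w).re) z 1) * (fderiv ℝ (fun w => (G w).re) z Complex.I)
      - (fderiv ℝ (fun w => (F w).re) z Complex.I) * (fderiv ℝ (fun w => (G w).re) z 1)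
    = (fderiv ℝ (fun w => (F w).im) z 1) * (fderiv ℝ (fun w => (G w).im) z Complex.I)
      - (fderiv ℝ (fun w => (F w).im) z Complex.I) * (fderiv ℝ (fun w => (G w).im) z 1)
    ∧
    (fderiv ℝ (fun w => (F w).re) z 1) * (fderiv ℝ (fun w => (G w).re) z Complex.I)
      - (fderiv ℝ (fun w => (F w).re) z Complex.I) * (fderiv ℝ (fun w => (G w).re) z 1)
    = (deriv F z * (starRingEnd ℂ) (deriv G z)).im := by
  simp only [hF.fderiv_re_apply, hG.fderiv_re_apply, hF.fderiv_im_apply, hG.fderiv_im_apply,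
    fderiv_eq_smul_deriv, smul_eq_mul, one_mul, mul_comm I]
  rw [re_mul_re_mul_I_sub_re_mul_I_mul_re, im_mul_im_mul_I_sub_im_mul_I_mul_im]
  exact ⟨rfl, rfl⟩
end

section
/- Let D ⊆ ℝ² be a closed disk of positive radius contained in the open positive quadrant (0,∞)². Then ∫_D 1/(x·y) dx dy < π², where the integral is with respect to Lebesgue measure on ℝ². -/
open Real MeasureTheory intervalIntegral Set

lemma denom_pos {c : ℝ} (hc0 : 0 < c) (hc1 : c ≤ 1) (φ : ℝ) :
    0 < 1 - (1 - c^2) * sin φ ^ 2 := by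
  have h2 : c^2 ≤ 1 := by nlinarith
  have h3 : (1 - c^2) * sin φ ^ 2 ≤ 1 - c^2 := by
    nlinarith [sin_sq_le_one φ, sq_nonneg (sin φ)]
  nlinarith [sq_nonneg c]

lemma W_hasDeriv {c : ℝ} (hc0 : 0 < c) (hc1 : c ≤ 1) (φ : ℝ) :
    HasDerivAt (fun φ : ℝ => (φ - arctan ((1 - c) * sin φ * cos φ / (cos φ ^ 2 + c * sin φ ^ 2))) / c)
      (1 / (1 - (1 - c^2) * sin φ ^ 2)) φ := by
  have hDpos : 0 < cos φ ^ 2 + c * sin φ ^ 2 := by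
    nlinarith [sin_sq_add_cos_sq φ, sq_nonneg (sin φ), sq_nonneg (cos φ)]
  have hN : HasDerivAt (fun φ : ℝ => (1 - c) * sin φ * cos φ)
      ((1 - c) * (cos φ ^ 2 - sin φ ^ 2)) φ := by
    have h1 : HasDerivAt (fun φ : ℝ => sin φ * cos φ) (cos φ * cos φ + sin φ * (-sin φ)) φ :=
      (hasDerivAt_sin φ).mul (hasDerivAt_cos φ)
    have := h1.const_mul (1 - c)
    convert this using 1
    · rfl
    · rfl
    · ext x; ring
    · ring
  have hD : HasDerivAt (fun φ : ℝ => cos φ ^ 2 + c * sin φ ^ 2)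
      (2 * (c - 1) * sin φ * cos φ) φ := by
    have h1 : HasDerivAt (fun φ : ℝ => cos φ ^ 2) (2 * cos φ * (-sin φ)) φ := by
      simpa using ((hasDerivAt_cos φ).fun_pow 2)
    have h2 : HasDerivAt (fun φ : ℝ => sin φ ^ 2) (2 * sin φ * cos φ) φ := by
      simpa using ((hasDerivAt_sin φ).fun_pow 2)
    have := h1.add (h2.const_mul c)
    convert this using 1
    · rfl
    · rfl
    · rfl
    ring
  have hQ := hN.div hD hDpos.ne'
  have hA := hQ.arctan
  have hF := ((hasDerivAt_id φ).sub hA).div_const c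
  convert hF using 1
  · rfl
  · rfl
  · rfl
  have h1 : sin φ ^ 2 + cos φ ^ 2 = 1 := sin_sq_add_cos_sq φ
  have hdenpos := denom_pos hc0 hc1 φ
  have key : (cos φ ^ 2 + c * sin φ ^ 2)^2 + ((1 - c) * sin φ * cos φ)^2
      = 1 - (1 - c^2) * sin φ ^ 2 := by
    linear_combination (sin φ^2*c^2 + cos φ^2 + 1) * h1
  have aux : (1 - (1 - c^2) * sin φ ^ 2)
      - ((1 - c) * (cos φ ^ 2 - sin φ ^ 2) * (cos φ ^ 2 + c * sin φ ^ 2)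
        - (1 - c) * sin φ * cos φ * (2 * (c - 1) * sin φ * cos φ)) = c := by
    linear_combination (cos φ^2*c - cos φ^2 + sin φ^2*c - sin φ^2*c^2 + c - 1) * h1
  simp only [Pi.div_apply]
  have hE := hdenpos.ne'
  have hDn := hDpos.ne'
  rw [show 1 + ((1 - c) * sin φ * cos φ / (cos φ ^ 2 + c * sin φ ^ 2))^2
      = (1 - (1 - c^2) * sin φ ^ 2) / (cos φ ^ 2 + c * sin φ ^ 2)^2 by
    rw [← key]; field_simp]
  field_simp
  linear_combination -aux

lemma W_integral {c : ℝ} (hc0 : 0 < c) (hc1 : c ≤ 1) :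
    ∫ φ in (0:ℝ)..π, 1 / (1 - (1 - c^2) * sin φ ^ 2) = π / c := by
  have hcont : Continuous fun φ : ℝ => 1 / (1 - (1 - c^2) * sin φ ^ 2) := by
    apply continuous_const.div
    · continuity
    · exact fun φ => (denom_pos hc0 hc1 φ).ne'
  rw [integral_eq_sub_of_hasDerivAt (fun φ _ => W_hasDeriv hc0 hc1 φ)
    (hcont.intervalIntegrable 0 π)]
  simp [Real.sin_pi, Real.cos_pi]

lemma log_rep {R q : ℝ} (hq0 : 0 ≤ q) (hqR : q < R) :
    Real.log ((R + q) / (R - q)) = ∫ τ in (0:ℝ)..(π/2), 2*q*R*cos τ / (R^2 - q^2 * sin τ ^ 2) := by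
  have hR : 0 < R := lt_of_le_of_lt hq0 hqR
  have hplus : ∀ τ : ℝ, 0 < R + q * sin τ := by
    intro τ
    have := neg_one_le_sin τ
    nlinarith [sin_le_one τ]
  have hminus : ∀ τ : ℝ, 0 < R - q * sin τ := by
    intro τ
    nlinarith [sin_le_one τ, neg_one_le_sin τ]
  have hden : ∀ τ : ℝ, 0 < R^2 - q^2 * sin τ ^ 2 := by
    intro τ
    have := mul_pos (hplus τ) (hminus τ)
    nlinarith [this]
  have hderiv : ∀ τ ∈ Set.uIcc (0:ℝ) (π/2),
      HasDerivAt (fun τ : ℝ => Real.log (R + q * sin τ) - Real.log (R - q * sin τ))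
        (2*q*R*cos τ / (R^2 - q^2 * sin τ ^ 2)) τ := by
    intro τ _
    have h1 : HasDerivAt (fun τ : ℝ => R + q * sin τ) (q * cos τ) τ := by
      simpa using (((hasDerivAt_sin τ).const_mul q).const_add R)
    have h2 : HasDerivAt (fun τ : ℝ => R - q * sin τ) (-(q * cos τ)) τ := by
      have := ((hasDerivAt_sin τ).const_mul q).const_sub R
      simpa using this
    have := (h1.log (hplus τ).ne').sub (h2.log (hminus τ).ne')
    convert this using 1
    · rfl
    · rfl
    · rfl
    rw [div_sub_div _ _ (hplus τ).ne' (hminus τ).ne']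
    rw [div_eq_div_iff (hden τ).ne' (mul_pos (hplus τ) (hminus τ)).ne']
    ring
  have hcont : Continuous fun τ : ℝ => 2*q*R*cos τ / (R^2 - q^2 * sin τ ^ 2) := by
    apply Continuous.div
    · continuity
    · continuity
    · exact fun τ => (hden τ).ne'
  rw [integral_eq_sub_of_hasDerivAt hderiv (hcont.intervalIntegrable 0 (π/2))]
  have hRq : (0:ℝ) < R - q := by linarith
  rw [Real.log_div (by positivity) hRq.ne']
  simp [Real.sin_pi_div_two, Real.sin_zero]

lemma phi_integral_le {r R τ : ℝ} (hr : 0 < r) (hrR : r < R) (hτ : τ ∈ Set.Icc (0:ℝ) (π/2)) :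
    ∫ φ in (0:ℝ)..π, 2*r^2*R^2*(sin φ)^2*cos τ /
      ((R^2 - r^2*(cos φ)^2) * (R^2 - r^2*(sin φ)^2*(sin τ)^2)) ≤ 2*π := by
  have hRr : 0 < R^2 - r^2 := by nlinarith
  have hden1 : ∀ φ : ℝ, 0 < R^2 - r^2*(cos φ)^2 := by
    intro φ; nlinarith [cos_sq_le_one φ, sq_nonneg (cos φ)]
  have hden2 : ∀ φ : ℝ, 0 < R^2 - r^2*(sin φ)^2*(sin τ)^2 := by
    intro φ
    have h1 : (sin φ)^2*(sin τ)^2 ≤ 1 :=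
      mul_le_one₀ (sin_sq_le_one φ) (sq_nonneg _) (sin_sq_le_one τ)
    nlinarith [sq_nonneg (sin φ * sin τ)]
  have hcontL : Continuous fun φ : ℝ => 2*r^2*R^2*(sin φ)^2*cos τ /
      ((R^2 - r^2*(cos φ)^2) * (R^2 - r^2*(sin φ)^2*(sin τ)^2)) := by
    apply Continuous.div
    · continuity
    · continuity
    · exact fun φ => (mul_pos (hden1 φ) (hden2 φ)).ne'
  rcases eq_or_lt_of_le (Real.cos_nonneg_of_mem_Icc
    ⟨by linarith [hτ.1, pi_pos.le], hτ.2⟩) with hct | hct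
  · rw [show cos τ = 0 from hct.symm]
    simp only [mul_zero, zero_div, intervalIntegral.integral_zero]
    positivity
  · -- cos τ > 0
    have ht1 : (sin τ)^2 = 1 - (cos τ)^2 := by
      have := sin_sq_add_cos_sq τ; linarith
    have hc1 : cos τ ≤ 1 := cos_le_one τ
    have hct2 : (0:ℝ) ≤ 1 - cos τ ^ 2 := by nlinarith [cos_sq_le_one τ]
    have hptwise : ∀ φ ∈ Set.Icc (0:ℝ) π,
        2*r^2*R^2*(sin φ)^2*cos τ /
          ((R^2 - r^2*(cos φ)^2) * (R^2 - r^2*(sin φ)^2*(sin τ)^2))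
        ≤ 2*cos τ * (1 / (1 - (1 - (cos τ)^2) * sin φ ^ 2)) := by
      intro φ _
      have hd3 : 0 < 1 - (1 - (cos τ)^2) * sin φ ^ 2 := denom_pos hct hc1 φ
      have e1 : R^2 * (sin φ)^2 ≤ R^2 - r^2*(cos φ)^2 := by
        nlinarith [sin_sq_add_cos_sq φ, sq_nonneg (cos φ)]
      have e2 : R^2 * (1 - (1-(cos τ)^2)*(sin φ)^2) ≤ R^2 - r^2*(sin φ)^2*(sin τ)^2 := by
        rw [ht1]
        nlinarith [mul_nonneg (mul_nonneg hct2 (sq_nonneg (sin φ))) hRr.le]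
      have prod : R^2*(sin φ)^2 * (R^2*(1 - (1-(cos τ)^2)*(sin φ)^2))
          ≤ (R^2 - r^2*(cos φ)^2) * (R^2 - r^2*(sin φ)^2*(sin τ)^2) :=
        mul_le_mul e1 e2 (mul_nonneg (sq_nonneg R) hd3.le) (hden1 φ).le
      have key : r^2*R^2*(sin φ)^2*(1 - (1-(cos τ)^2)*(sin φ)^2)
          ≤ (R^2 - r^2*(cos φ)^2) * (R^2 - r^2*(sin φ)^2*(sin τ)^2) := by
        refine le_trans ?_ prod
        nlinarith [mul_nonneg (mul_nonneg hRr.le (sq_nonneg R))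
          (mul_nonneg (sq_nonneg (sin φ)) hd3.le)]
      rw [mul_one_div, div_le_div_iff₀ (mul_pos (hden1 φ) (hden2 φ)) hd3]
      calc 2*r^2*R^2*(sin φ)^2*cos τ * (1 - (1 - (cos τ)^2) * sin φ ^ 2)
          = 2*cos τ * (r^2*R^2*(sin φ)^2*(1 - (1-(cos τ)^2)*(sin φ)^2)) := by ring
        _ ≤ 2*cos τ * ((R^2 - r^2*(cos φ)^2) * (R^2 - r^2*(sin φ)^2*(sin τ)^2)) :=
            mul_le_mul_of_nonneg_left key (by positivity)
    have hcontR : Continuous fun φ : ℝ => 2*cos τ * (1 / (1 - (1 - (cos τ)^2) * sin φ ^ 2)) := by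
      apply continuous_const.mul
      apply continuous_const.div
      · continuity
      · exact fun φ => (denom_pos hct hc1 φ).ne'
    calc ∫ φ in (0:ℝ)..π, 2*r^2*R^2*(sin φ)^2*cos τ /
          ((R^2 - r^2*(cos φ)^2) * (R^2 - r^2*(sin φ)^2*(sin τ)^2))
        ≤ ∫ φ in (0:ℝ)..π, 2*cos τ * (1 / (1 - (1 - (cos τ)^2) * sin φ ^ 2)) := by
          apply intervalIntegral.integral_mono_on pi_pos.le
            (hcontL.intervalIntegrable 0 π) (hcontR.intervalIntegrable 0 π) hptwise
      _ = 2*cos τ * (π / cos τ) := by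
          rw [intervalIntegral.integral_const_mul, W_integral hct hc1]
      _ = 2*π := by field_simp

lemma O_le {r R : ℝ} (hr : 0 < r) (hrR : r < R) :
    ∫ φ in (0:ℝ)..π, (r*sin φ) * Real.log ((R + r*sin φ)/(R - r*sin φ)) *
      (R/(R^2 - r^2*(cos φ)^2)) ≤ π^2 := by
  have hRr : 0 < R^2 - r^2 := by nlinarith
  have hden1 : ∀ φ : ℝ, 0 < R^2 - r^2*(cos φ)^2 := by
    intro φ; nlinarith [cos_sq_le_one φ, sq_nonneg (cos φ)]
  have hden2 : ∀ φ τ : ℝ, 0 < R^2 - r^2*(sin φ)^2*(sin τ)^2 := by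
    intro φ τ
    have h1 : (sin φ)^2*(sin τ)^2 ≤ 1 :=
      mul_le_one₀ (sin_sq_le_one φ) (sq_nonneg _) (sin_sq_le_one τ)
    nlinarith [sq_nonneg (sin φ * sin τ)]
  set P : ℝ → ℝ → ℝ := fun φ τ => 2*r^2*R^2*(sin φ)^2*cos τ /
      ((R^2 - r^2*(cos φ)^2) * (R^2 - r^2*(sin φ)^2*(sin τ)^2)) with hP
  have hcontP : Continuous (Function.uncurry P) := by
    apply Continuous.div
    · fun_prop
    · fun_prop
    · exact fun z => (mul_pos (hden1 z.1) (hden2 z.1 z.2)).ne'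
  -- step 1 : rewrite the integrand
  have step1 : ∫ φ in (0:ℝ)..π, (r*sin φ) * Real.log ((R + r*sin φ)/(R - r*sin φ)) *
      (R/(R^2 - r^2*(cos φ)^2)) = ∫ φ in (0:ℝ)..π, ∫ τ in (0:ℝ)..(π/2), P φ τ := by
    apply intervalIntegral.integral_congr
    intro φ hφ
    rw [Set.uIcc_of_le pi_pos.le] at hφ
    dsimp only
    have hsin : 0 ≤ sin φ := sin_nonneg_of_nonneg_of_le_pi hφ.1 hφ.2
    have hq0 : 0 ≤ r * sin φ := mul_nonneg hr.le hsin
    have hqR : r * sin φ < R := by nlinarith [sin_le_one φ]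
    rw [log_rep hq0 hqR]
    rw [mul_comm ((r*sin φ)) _, mul_assoc, ← intervalIntegral.integral_mul_const]
    apply intervalIntegral.integral_congr
    intro τ _
    have d1 := (hden1 φ).ne'
    have d2 := (hden2 φ τ).ne'
    have e : R^2 - (r*sin φ)^2*sin τ^2 = R^2 - r^2*sin φ^2*sin τ^2 := by ring
    simp only [hP]
    rw [e, div_mul_eq_mul_div, div_eq_div_iff d2 (mul_ne_zero d1 d2)]
    field_simp
  rw [step1]
  -- step 2 : swap the order of integration
  have hInt : Integrable (Function.uncurry P)
      ((volume.restrict (Set.Ioc (0:ℝ) π)).prod (volume.restrict (Set.Ioc (0:ℝ) (π/2)))) := by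
    rw [Measure.prod_restrict]
    exact (hcontP.continuousOn.integrableOn_compact
      (isCompact_Icc.prod isCompact_Icc : IsCompact (Set.Icc (0:ℝ) π ×ˢ Set.Icc (0:ℝ) (π/2)))).mono_set
      (Set.prod_mono Set.Ioc_subset_Icc_self Set.Ioc_subset_Icc_self)
  have swap : ∫ φ in (0:ℝ)..π, ∫ τ in (0:ℝ)..(π/2), P φ τ
      = ∫ τ in Set.Ioc (0:ℝ) (π/2), ∫ φ in Set.Ioc (0:ℝ) π, P φ τ := by
    rw [intervalIntegral.integral_of_le pi_pos.le]
    have : ∀ φ : ℝ, ∫ τ in (0:ℝ)..(π/2), P φ τ = ∫ τ in Set.Ioc (0:ℝ) (π/2), P φ τ := fun φ =>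
      intervalIntegral.integral_of_le (by positivity)
    simp_rw [this]
    exact MeasureTheory.integral_integral_swap hInt
  rw [swap]
  -- step 3 : bound the outer integral
  have hbound : ∀ τ ∈ Set.Ioc (0:ℝ) (π/2), ∫ φ in Set.Ioc (0:ℝ) π, P φ τ ≤ 2*π := by
    intro τ hτ
    rw [← intervalIntegral.integral_of_le pi_pos.le]
    exact phi_integral_le hr hrR ⟨hτ.1.le, hτ.2⟩
  have hg_int : IntegrableOn (fun τ => ∫ φ in Set.Ioc (0:ℝ) π, P φ τ) (Set.Ioc (0:ℝ) (π/2)) :=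
    hInt.swap.integral_prod_left
  calc ∫ τ in Set.Ioc (0:ℝ) (π/2), ∫ φ in Set.Ioc (0:ℝ) π, P φ τ
      ≤ ∫ _τ in Set.Ioc (0:ℝ) (π/2), 2*π := by
        apply setIntegral_mono_on hg_int (integrableOn_const (by
          rw [Real.volume_Ioc]; exact ENNReal.ofReal_ne_top)) measurableSet_Ioc hbound
    _ = π^2 := by
        rw [setIntegral_const, measureReal_def, Real.volume_Ioc]
        rw [ENNReal.toReal_ofReal (by rw [sub_zero]; positivity)]
        simp only [smul_eq_mul, sub_zero]
        ring

lemma sqrt_le_r {r : ℝ} (hr : 0 ≤ r) (v : ℝ) : Real.sqrt (r^2 - v^2) ≤ r := by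
  calc Real.sqrt (r^2 - v^2) ≤ Real.sqrt (r^2) := by
        apply Real.sqrt_le_sqrt; nlinarith [sq_nonneg v]
    _ = r := by rw [Real.sqrt_sq hr]

lemma Osub {r R a : ℝ} (hr : 0 < r) (hrR : r < R) :
    ∫ x in (a-r)..(a+r), Real.log ((R + Real.sqrt (r^2 - (x-a)^2)) /
      (R - Real.sqrt (r^2 - (x-a)^2))) / (R + (x - a)) ≤ π^2 := by
  have hR : 0 < R := hr.trans hrR
  set f : ℝ → ℝ := fun x => Real.log ((R + Real.sqrt (r^2 - (x-a)^2)) /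
      (R - Real.sqrt (r^2 - (x-a)^2))) / (R + (x - a)) with hf
  have hsqrt_le : ∀ x : ℝ, Real.sqrt (r^2 - (x-a)^2) ≤ r := fun x => sqrt_le_r hr.le _
  have hden : ∀ x : ℝ, 0 < R - Real.sqrt (r^2 - (x-a)^2) := fun x => by
    have := hsqrt_le x; linarith
  have hcontf : ContinuousOn f (Set.Icc (a-r) (a+r)) := by
    apply ContinuousOn.div
    · apply ContinuousOn.log
      · apply ContinuousOn.div
        · fun_prop
        · fun_prop
        · exact fun x _ => (hden x).ne'
      · intro x _
        have h1 := Real.sqrt_nonneg (r^2 - (x-a)^2)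
        have := hden x
        positivity
    · fun_prop
    · intro x hx
      have : a - r ≤ x := hx.1
      nlinarith
  -- substitution x = a - r * cos φ
  have hg : ∀ φ ∈ Set.uIcc (0:ℝ) π, HasDerivAt (fun φ : ℝ => a - r * cos φ) (r * sin φ) φ := by
    intro φ _
    simpa using ((hasDerivAt_cos φ).const_mul r).const_sub a
  have himg : (fun φ : ℝ => a - r * cos φ) '' Set.uIcc 0 π ⊆ Set.Icc (a-r) (a+r) := by
    rintro _ ⟨φ, _, rfl⟩
    dsimp only
    constructor
    · nlinarith [cos_le_one φ]
    · nlinarith [neg_one_le_cos φ]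
  have hsub := intervalIntegral.integral_comp_smul_deriv' hg
    (by fun_prop : Continuous fun φ : ℝ => r * sin φ).continuousOn
    (hcontf.mono himg)
  rw [show a - r * cos 0 = a - r by simp,
    show a - r * cos π = a + r by rw [Real.cos_pi]; ring] at hsub
  rw [← hsub]
  -- rewrite the substituted integrand
  have key : ∀ φ ∈ Set.uIcc (0:ℝ) π, (r * sin φ) • (f ∘ (fun φ : ℝ => a - r * cos φ)) φ
      = r * sin φ * Real.log ((R + r*sin φ)/(R - r*sin φ)) / (R - r * cos φ) := by
    intro φ hφ
    rw [Set.uIcc_of_le pi_pos.le] at hφ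
    have hsin : 0 ≤ sin φ := sin_nonneg_of_nonneg_of_le_pi hφ.1 hφ.2
    have hs : Real.sqrt (r^2 - (a - r*cos φ - a)^2) = r * sin φ := by
      have : r^2 - (a - r*cos φ - a)^2 = (r * sin φ)^2 := by
        have := sin_sq_add_cos_sq φ; nlinarith
      rw [this, Real.sqrt_sq (mul_nonneg hr.le hsin)]
    simp only [smul_eq_mul, Function.comp, hf, hs]
    ring_nf
  rw [intervalIntegral.integral_congr key]
  -- reflection φ ↦ π - φ and averaging
  have hlogpos : ∀ φ : ℝ, 0 < (R + r*sin φ)/(R - r*sin φ) := by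
    intro φ
    have h1 : r * sin φ < R := by nlinarith [sin_le_one φ]
    have h2 : -R < r * sin φ := by nlinarith [neg_one_le_sin φ]
    apply div_pos <;> linarith
  have hcont1 : Continuous fun φ : ℝ =>
      r * sin φ * Real.log ((R + r*sin φ)/(R - r*sin φ)) / (R - r * cos φ) := by
    apply Continuous.div
    · apply Continuous.mul
      · fun_prop
      · apply Continuous.log
        · apply Continuous.div
          · fun_prop
          · fun_prop
          · intro φ
            have h1 : r * sin φ < R := by nlinarith [sin_le_one φ]
            exact (by linarith : (0:ℝ) < R - r * sin φ).ne'
        · exact fun φ => (hlogpos φ).ne'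
    · fun_prop
    · intro φ; have := neg_one_le_cos φ; have := cos_le_one φ; nlinarith
  have hcont2 : Continuous fun φ : ℝ =>
      r * sin φ * Real.log ((R + r*sin φ)/(R - r*sin φ)) / (R + r * cos φ) := by
    apply Continuous.div
    · apply Continuous.mul
      · fun_prop
      · apply Continuous.log
        · apply Continuous.div
          · fun_prop
          · fun_prop
          · intro φ
            have h1 : r * sin φ < R := by nlinarith [sin_le_one φ]
            exact (by linarith : (0:ℝ) < R - r * sin φ).ne'
        · exact fun φ => (hlogpos φ).ne'
    · fun_prop
    · intro φ; have := neg_one_le_cos φ; have := cos_le_one φ; nlinarith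
  have hrefl : ∫ φ in (0:ℝ)..π, r * sin φ * Real.log ((R + r*sin φ)/(R - r*sin φ)) / (R - r * cos φ)
      = ∫ φ in (0:ℝ)..π, r * sin φ * Real.log ((R + r*sin φ)/(R - r*sin φ)) / (R + r * cos φ) := by
    have := intervalIntegral.integral_comp_sub_left (fun φ =>
      r * sin φ * Real.log ((R + r*sin φ)/(R - r*sin φ)) / (R - r * cos φ)) π (a := 0) (b := π)
    rw [sub_self, sub_zero] at this
    rw [← this]
    apply intervalIntegral.integral_congr
    intro φ _
    simp only [Real.sin_pi_sub, Real.cos_pi_sub]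
    ring_nf
  have havg : ∫ φ in (0:ℝ)..π, r * sin φ * Real.log ((R + r*sin φ)/(R - r*sin φ)) / (R - r * cos φ)
      = ∫ φ in (0:ℝ)..π, (r*sin φ) * Real.log ((R + r*sin φ)/(R - r*sin φ)) *
        (R/(R^2 - r^2*(cos φ)^2)) := by
    have hsplit : ∫ φ in (0:ℝ)..π, r * sin φ * Real.log ((R + r*sin φ)/(R - r*sin φ)) / (R - r * cos φ)
        = (1/2) * ((∫ φ in (0:ℝ)..π, r * sin φ * Real.log ((R + r*sin φ)/(R - r*sin φ)) / (R - r * cos φ))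
          + ∫ φ in (0:ℝ)..π, r * sin φ * Real.log ((R + r*sin φ)/(R - r*sin φ)) / (R + r * cos φ)) := by
      rw [← hrefl]; ring
    rw [hsplit, ← intervalIntegral.integral_add (hcont1.intervalIntegrable 0 π)
      (hcont2.intervalIntegrable 0 π), ← intervalIntegral.integral_const_mul]
    apply intervalIntegral.integral_congr
    intro φ _
    have d1 : R - r * cos φ ≠ 0 := by
      have := neg_one_le_cos φ; have := cos_le_one φ; nlinarith
    have d2 : R + r * cos φ ≠ 0 := by
      have := neg_one_le_cos φ; have := cos_le_one φ; nlinarith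
    have d3 : R^2 - r^2*(cos φ)^2 ≠ 0 := by
      have := neg_one_le_cos φ; have := cos_le_one φ; nlinarith [sq_nonneg (cos φ), cos_sq_le_one φ]
    field_simp
    ring
  rw [hrefl] at *
  rw [← hrefl, havg]
  exact O_le hr hrR

lemma twoD {a b r R : ℝ} (hr : 0 < r) (hrR : r < R) :
    ∫ q in {q : ℝ × ℝ | (q.1 - a)^2 + (q.2 - b)^2 ≤ r^2},
      1 / ((R + (q.1 - a)) * (R + (q.2 - b))) ≤ π^2 := by
  have hR : 0 < R := hr.trans hrR
  set S : Set (ℝ × ℝ) := {q : ℝ × ℝ | (q.1 - a)^2 + (q.2 - b)^2 ≤ r^2} with hS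
  set G : ℝ × ℝ → ℝ := fun q => 1 / ((R + (q.1 - a)) * (R + (q.2 - b))) with hG
  have hSm : MeasurableSet S := by
    apply measurableSet_le <;> fun_prop
  have hbound : ∀ q ∈ S, |q.1 - a| ≤ r ∧ |q.2 - b| ≤ r := by
    intro q hq
    constructor <;>
    · apply abs_le_of_sq_le_sq _ hr.le
      simp only [hS, Set.mem_setOf_eq] at hq
      nlinarith [sq_nonneg (q.1 - a), sq_nonneg (q.2 - b)]
  have hSsub : S ⊆ Metric.closedBall (a, b) r := by
    intro q hq
    rw [Metric.mem_closedBall, Prod.dist_eq]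
    have := hbound q hq
    simp only [Real.dist_eq]
    exact max_le this.1 this.2
  have hScomp : IsCompact S := by
    apply Metric.isCompact_of_isClosed_isBounded
    · apply isClosed_le <;> fun_prop
    · exact (Metric.isBounded_closedBall).subset hSsub
  have hGpos : ∀ q ∈ S, 0 < (R + (q.1 - a)) * (R + (q.2 - b)) := by
    intro q hq
    have h := hbound q hq
    have h1 := abs_le.1 h.1
    have h2 := abs_le.1 h.2
    have : 0 < R + (q.1 - a) := by linarith [h1.1]
    have : 0 < R + (q.2 - b) := by linarith [h2.1]
    positivity
  have hGcont : ContinuousOn G S := by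
    apply ContinuousOn.div
    · fun_prop
    · fun_prop
    · exact fun q hq => (hGpos q hq).ne'
  have hGint : IntegrableOn G S := hGcont.integrableOn_compact hScomp
  -- convert to an iterated integral
  rw [← MeasureTheory.integral_indicator hSm]
  have hIndInt : Integrable (S.indicator G) := (integrable_indicator_iff hSm).2 hGint
  rw [show (volume : Measure (ℝ × ℝ)) = (volume : Measure ℝ).prod volume from MeasureTheory.Measure.volume_eq_prod ℝ ℝ]
    at hIndInt ⊢
  rw [integral_prod _ hIndInt]
  -- evaluate inner integrals
  have inner_eq : ∀ x : ℝ, (∫ y : ℝ, S.indicator G (x, y)) =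
      (Set.Icc (a - r) (a + r)).indicator (fun x =>
        Real.log ((R + Real.sqrt (r^2 - (x-a)^2)) / (R - Real.sqrt (r^2 - (x-a)^2)))
          / (R + (x - a))) x := by
    intro x
    by_cases hx : x ∈ Set.Icc (a - r) (a + r)
    · set s : ℝ := Real.sqrt (r^2 - (x-a)^2) with hs
      have hxr : (x - a)^2 ≤ r^2 := by
        rcases hx with ⟨h1, h2⟩
        nlinarith
      have hs0 : 0 ≤ s := Real.sqrt_nonneg _
      have hs2 : s^2 = r^2 - (x-a)^2 := Real.sq_sqrt (by linarith)
      have hsr : s ≤ r := sqrt_le_r hr.le _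
      have hsec : (fun y => S.indicator G (x, y)) =
          (Set.Icc (b - s) (b + s)).indicator (fun y => G (x, y)) := by
        funext y
        have hmem : (x, y) ∈ S ↔ y ∈ Set.Icc (b - s) (b + s) := by
          simp only [hS, Set.mem_setOf_eq, Set.mem_Icc]
          constructor
          · intro h
            have h2 : (y - b)^2 ≤ s^2 := by nlinarith
            have := abs_le_of_sq_le_sq' h2 hs0
            constructor <;> linarith [this.1, this.2]
          · intro h
            have h2 : (y - b)^2 ≤ s^2 := by nlinarith [h.1, h.2]
            nlinarith
        by_cases hy : (x, y) ∈ S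
        · rw [Set.indicator_of_mem hy, Set.indicator_of_mem (hmem.1 hy)]
        · rw [Set.indicator_of_notMem hy, Set.indicator_of_notMem (fun h => hy (hmem.2 h))]
      rw [hsec, MeasureTheory.integral_indicator measurableSet_Icc,
        Set.indicator_of_mem hx]
      rw [integral_Icc_eq_integral_Ioc, ← intervalIntegral.integral_of_le (by linarith)]
      have hGx : ∀ y : ℝ, G (x, y) = (1/(R + (x - a))) * (1/(R + (y - b))) := by
        intro y
        simp only [hG]
        rw [div_mul_div_comm, one_mul]
      simp_rw [hGx]
      rw [intervalIntegral.integral_const_mul]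
      have hcomp : (fun y : ℝ => 1/(R + (y - b))) = fun y : ℝ => (fun u : ℝ => 1/u) (y + (R - b)) := by
        funext y; ring_nf
      rw [hcomp, intervalIntegral.integral_comp_add_right (fun u : ℝ => 1/u) (R - b)]
      rw [show b - s + (R - b) = R - s by ring, show b + s + (R - b) = R + s by ring]
      rw [integral_one_div (by
        intro hmem0
        rw [Set.mem_uIcc] at hmem0
        rcases hmem0 with ⟨h1, _⟩ | ⟨h1, _⟩ <;> linarith)]
      rw [one_div_mul_eq_div]
    · rw [Set.indicator_of_notMem hx]
      have hempty : (fun y => S.indicator G (x, y)) = fun _ => (0:ℝ) := by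
        funext y
        apply Set.indicator_of_notMem
        simp only [hS, Set.mem_setOf_eq]
        intro h
        apply hx
        have h2 : (x - a)^2 ≤ r^2 := by nlinarith [sq_nonneg (y - b)]
        have := abs_le_of_sq_le_sq' h2 hr.le
        constructor <;> [linarith [this.1]; linarith [this.2]]
      rw [hempty]
      simp
  simp_rw [inner_eq]
  rw [MeasureTheory.integral_indicator measurableSet_Icc]
  rw [integral_Icc_eq_integral_Ioc, ← intervalIntegral.integral_of_le (by linarith)]
  exact Osub hr hrR

set_option maxHeartbeats 2000000 in
/-- For any closed disk `D` of positive radius contained in the open positive quadrant,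
the logarithmic area `∫_D 1/(x·y) dx dy` is strictly less than `π²`. -/
theorem log_area_of_disk_lt_pi_sq (c : EuclideanSpace ℝ (Fin 2)) (r : ℝ) (hr : 0 < r)
    (hD : Metric.closedBall c r ⊆ {p : EuclideanSpace ℝ (Fin 2) | 0 < p 0 ∧ 0 < p 1}) :
    ∫ p in Metric.closedBall c r, 1 / (p 0 * p 1) < π ^ 2 := by
  set a : ℝ := c 0 with ha_def
  set b : ℝ := c 1 with hb_def
  -- the center coordinates exceed r
  have hmem : ∀ i : Fin 2, c - r • EuclideanSpace.single i (1:ℝ) ∈ Metric.closedBall c r := by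
    intro i
    rw [Metric.mem_closedBall, dist_eq_norm]
    have : c - r • EuclideanSpace.single i (1:ℝ) - c = -(r • EuclideanSpace.single i (1:ℝ)) := by
      abel
    rw [this, norm_neg, norm_smul, EuclideanSpace.norm_single]
    simp [abs_of_pos hr]
  have h0 : ∀ i : Fin 2, (c - r • EuclideanSpace.single i (1:ℝ)) i = c i - r := by
    intro i
    simp [EuclideanSpace.single_apply]
  have ha : r < a := by
    have h := (hD (hmem 0)).1
    rw [h0 0] at h
    rw [ha_def]
    linarith
  have hb : r < b := by
    have h := (hD (hmem 1)).2
    rw [h0 1] at h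
    rw [hb_def]
    linarith
  -- transport to ℝ × ℝ
  set S' : Set (ℝ × ℝ) := {q : ℝ × ℝ | (q.1 - a)^2 + (q.2 - b)^2 ≤ r^2} with hS'
  set χ : EuclideanSpace ℝ (Fin 2) ≃ᵐ ℝ × ℝ :=
    (MeasurableEquiv.toLp 2 (Fin 2 → ℝ)).symm.trans MeasurableEquiv.finTwoArrow with hχ
  have hMP : MeasurePreserving χ volume volume :=
    (volume_preserving_finTwoArrow ℝ).comp
      (EuclideanSpace.volume_preserving_symm_measurableEquiv_toLp (Fin 2))
  have hball : Metric.closedBall c r = χ ⁻¹' S' := by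
    ext p
    rw [Metric.mem_closedBall, EuclideanSpace.dist_eq]
    simp only [Real.dist_eq, sq_abs]
    rw [show ∑ i, (p i - c i)^2 = (p 0 - a)^2 + (p 1 - b)^2 from Fin.sum_univ_two _]
    have hnn : (0:ℝ) ≤ (p 0 - a)^2 + (p 1 - b)^2 := by positivity
    constructor
    · intro h
      have := Real.sq_sqrt hnn
      have h2 : Real.sqrt ((p 0 - a)^2 + (p 1 - b)^2) ^ 2 ≤ r^2 := by
        apply pow_le_pow_left₀ (Real.sqrt_nonneg _) h
      rw [this] at h2
      exact h2
    · intro h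
      have h2 : Real.sqrt ((p 0 - a)^2 + (p 1 - b)^2) ≤ Real.sqrt (r^2) :=
        Real.sqrt_le_sqrt h
      rwa [Real.sqrt_sq hr.le] at h2
  have echi : ∀ p : EuclideanSpace ℝ (Fin 2), (1:ℝ) / (p 0 * p 1)
      = (fun q : ℝ × ℝ => 1 / (q.1 * q.2)) (χ p) := by
    intro p
    simp [hχ, MeasurableEquiv.trans_apply, MeasurableEquiv.finTwoArrow_apply,
      MeasurableEquiv.coe_toLp_symm]
  have htrans : ∫ p in Metric.closedBall c r, 1 / (p 0 * p 1)
      = ∫ q in S', 1 / (q.1 * q.2) := by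
    rw [hball]
    rw [show (fun p : EuclideanSpace ℝ (Fin 2) => 1 / (p 0 * p 1))
      = fun p => (fun q : ℝ × ℝ => 1 / (q.1 * q.2)) (χ p) from funext echi]
    exact hMP.setIntegral_preimage_emb χ.measurableEmbedding
      (fun q : ℝ × ℝ => 1 / (q.1 * q.2)) S'
  rw [htrans]
  -- set up the comparison constants
  set m : ℝ := min a b with hm_def
  have hrm : r < m := lt_min ha hb
  set R : ℝ := (r + m)/2 with hR_def
  have hrR : r < R := by rw [hR_def]; linarith
  have hRm : R < m := by rw [hR_def]; linarith
  have hRpos : 0 < R := hr.trans hrR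
  set lam : ℝ := (m + r)/(R + r) with hlam_def
  have hRr_pos : 0 < R + r := by linarith
  have hlam1 : 1 < lam := by
    rw [hlam_def, lt_div_iff₀ hRr_pos]
    linarith
  have hlam_eq : lam * (R + r) = m + r := by
    rw [hlam_def, div_mul_cancel₀]
    exact hRr_pos.ne'
  have hlam_pos : 0 < lam := lt_trans one_pos hlam1
  -- geometry facts on S'
  have hbound : ∀ q ∈ S', |q.1 - a| ≤ r ∧ |q.2 - b| ≤ r := by
    intro q hq
    simp only [hS', Set.mem_setOf_eq] at hq
    constructor <;>
    · apply abs_le_of_sq_le_sq _ hr.le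
      nlinarith [sq_nonneg (q.1 - a), sq_nonneg (q.2 - b)]
  have hfac : ∀ q ∈ S', lam * (R + (q.1 - a)) ≤ q.1 ∧ lam * (R + (q.2 - b)) ≤ q.2 := by
    intro q hq
    obtain ⟨h1, h2⟩ := hbound q hq
    rw [abs_le] at h1 h2
    have hma : m ≤ a := min_le_left a b
    have hmb : m ≤ b := min_le_right a b
    constructor
    · nlinarith [mul_nonneg (sub_nonneg.2 hlam1.le) (sub_nonneg.2 h1.2)]
    · nlinarith [mul_nonneg (sub_nonneg.2 hlam1.le) (sub_nonneg.2 h2.2)]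
  have hpos1 : ∀ q ∈ S', 0 < R + (q.1 - a) ∧ 0 < R + (q.2 - b) := by
    intro q hq
    obtain ⟨h1, h2⟩ := hbound q hq
    rw [abs_le] at h1 h2
    constructor <;> [linarith [h1.1]; linarith [h2.1]]
  have hqpos : ∀ q ∈ S', 0 < q.1 ∧ 0 < q.2 := by
    intro q hq
    obtain ⟨k1, k2⟩ := hfac q hq
    obtain ⟨p1, p2⟩ := hpos1 q hq
    exact ⟨lt_of_lt_of_le (by positivity) k1, lt_of_lt_of_le (by positivity) k2⟩
  -- pointwise bound
  have hpt : ∀ q ∈ S', 1 / (q.1 * q.2)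
      ≤ (1/lam^2) * (1 / ((R + (q.1 - a)) * (R + (q.2 - b)))) := by
    intro q hq
    obtain ⟨k1, k2⟩ := hfac q hq
    obtain ⟨p1, p2⟩ := hpos1 q hq
    obtain ⟨hq1, hq2⟩ := hqpos q hq
    have hprod : lam^2 * ((R + (q.1 - a)) * (R + (q.2 - b))) ≤ q.1 * q.2 := by
      have := mul_le_mul k1 k2 (by positivity) hq1.le
      nlinarith [this]
    have hdenpos : 0 < lam^2 * ((R + (q.1 - a)) * (R + (q.2 - b))) := by positivity
    calc 1 / (q.1 * q.2) ≤ 1 / (lam^2 * ((R + (q.1 - a)) * (R + (q.2 - b)))) :=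
          one_div_le_one_div_of_le hdenpos hprod
      _ = (1/lam^2) * (1 / ((R + (q.1 - a)) * (R + (q.2 - b)))) := by
          rw [one_div, one_div, one_div, ← mul_inv, mul_comm]
  -- compactness and integrability
  have hSm : MeasurableSet S' := by
    apply measurableSet_le <;> fun_prop
  have hScomp : IsCompact S' := by
    apply Metric.isCompact_of_isClosed_isBounded
    · apply isClosed_le <;> fun_prop
    · apply (Metric.isBounded_closedBall (x := ((a,b) : ℝ × ℝ)) (r := r)).subset
      intro q hq
      rw [Metric.mem_closedBall, Prod.dist_eq]
      obtain ⟨h1, h2⟩ := hbound q hq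
      simp only [Real.dist_eq]
      exact max_le h1 h2
  have hfint : IntegrableOn (fun q : ℝ × ℝ => 1 / (q.1 * q.2)) S' := by
    apply ContinuousOn.integrableOn_compact hScomp
    apply ContinuousOn.div
    · fun_prop
    · fun_prop
    · intro q hq
      obtain ⟨hq1, hq2⟩ := hqpos q hq
      positivity
  have hgint : IntegrableOn (fun q : ℝ × ℝ =>
      (1/lam^2) * (1 / ((R + (q.1 - a)) * (R + (q.2 - b))))) S' := by
    apply ContinuousOn.integrableOn_compact hScomp
    apply ContinuousOn.mul continuousOn_const
    apply ContinuousOn.div continuousOn_const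
    · fun_prop
    · intro q hq
      obtain ⟨p1, p2⟩ := hpos1 q hq
      positivity
  -- combine
  have hmono : ∫ q in S', 1 / (q.1 * q.2)
      ≤ ∫ q in S', (1/lam^2) * (1 / ((R + (q.1 - a)) * (R + (q.2 - b)))) :=
    setIntegral_mono_on hfint hgint hSm hpt
  have hsplit : ∫ q in S', (1/lam^2) * (1 / ((R + (q.1 - a)) * (R + (q.2 - b))))
      = (1/lam^2) * ∫ q in S', 1 / ((R + (q.1 - a)) * (R + (q.2 - b))) :=
    integral_const_mul _ _
  have h2d := twoD (a := a) (b := b) hr hrR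
  have hlamsq : 1 < lam^2 := by nlinarith
  have hfinal : (1/lam^2) * ∫ q in S', 1 / ((R + (q.1 - a)) * (R + (q.2 - b))) < π^2 := by
    have hnn : (0:ℝ) ≤ ∫ q in S', 1 / ((R + (q.1 - a)) * (R + (q.2 - b))) := by
      apply setIntegral_nonneg hSm
      intro q hq
      obtain ⟨p1, p2⟩ := hpos1 q hq
      positivity
    have hlt1 : (1/lam^2) < 1 := by
      rw [div_lt_one (by positivity)]
      exact hlamsq
    calc (1/lam^2) * ∫ q in S', 1 / ((R + (q.1 - a)) * (R + (q.2 - b)))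
        ≤ (1/lam^2) * π^2 := by
          apply mul_le_mul_of_nonneg_left h2d (by positivity)
      _ < 1 * π^2 := by
          apply mul_lt_mul_of_pos_right hlt1 (by positivity)
      _ = π^2 := one_mul _
  calc ∫ q in S', 1 / (q.1 * q.2)
      ≤ ∫ q in S', (1/lam^2) * (1 / ((R + (q.1 - a)) * (R + (q.2 - b)))) := hmono
    _ = (1/lam^2) * ∫ q in S', 1 / ((R + (q.1 - a)) * (R + (q.2 - b))) := hsplit
    _ < π^2 := hfinal
end

section
/- Let (u,v) ∈ ℝ². There exist nonzero complex numbers x, y with x + y = 1, log|x| = u and log|y| = v if and only if exp u ≤ exp v + 1, exp v ≤ exp u + 1 and 1 ≤ exp u + exp v. -/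
/-! The necessity of the three inequalities is the triangle inequality for `x + y = 1`.
Conversely, for side lengths `a`, `b`, `1` satisfying them one builds the triangle `0, 1, z`
explicitly: the foot of the altitude from `z` is `t = (1 + a² - b²) / 2`, and the inequalities are
exactly what makes `t² ≤ a²`, so the height `√(a² - t²)` exists. -/

open Real

theorem norm_le_of_add_eq {E : Type*} [SeminormedAddCommGroup E] {x y w : E} (h : x + y = w) :
    ‖x‖ ≤ ‖y‖ + ‖w‖ ∧ ‖y‖ ≤ ‖x‖ + ‖w‖ ∧ ‖w‖ ≤ ‖x‖ + ‖y‖ := by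
  subst h
  have hx := norm_le_add_norm_add x y
  have hy := norm_le_add_norm_add y x
  rw [add_comm y x] at hy
  exact ⟨by linarith, by linarith, norm_add_le x y⟩

theorem Complex.exists_norm_eq_norm_one_sub_eq {a b : ℝ}
    (hab : a ≤ b + 1) (hba : b ≤ a + 1) (h1 : 1 ≤ a + b) :
    ∃ z : ℂ, ‖z‖ = a ∧ ‖1 - z‖ = b := by
  have ha : 0 ≤ a := by linarith
  have hb : 0 ≤ b := by linarith
  have hb_le : b ^ 2 ≤ (a + 1) ^ 2 := pow_le_pow_left₀ hb hba 2
  have hb_ge : (a - 1) ^ 2 ≤ b ^ 2 := sq_le_sq' (by linarith) (by linarith)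
  set t := (1 + a ^ 2 - b ^ 2) / 2 with ht_def
  have ht : t ^ 2 ≤ a ^ 2 := sq_le_sq' (by linarith) (by linarith)
  set s := √(a ^ 2 - t ^ 2)
  have hs : s * s = a ^ 2 - t ^ 2 := mul_self_sqrt (sub_nonneg.2 ht)
  refine ⟨⟨t, s⟩, ?_, ?_⟩
  · rw [← sq_eq_sq₀ (norm_nonneg _) ha, Complex.sq_norm, Complex.normSq_mk]
    linear_combination hs
  · have h1z : (1 - ⟨t, s⟩ : ℂ) = ⟨1 - t, -s⟩ := Complex.ext (by simp) (by simp)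
    rw [h1z, ← sq_eq_sq₀ (norm_nonneg _) hb, Complex.sq_norm, Complex.normSq_mk]
    linear_combination hs - 2 * ht_def

/-- Description of the amoeba of the line `x + y = 1` in `(ℂ*)²`: a point `(u, v)` is in the
amoeba iff the three triangle inequalities hold for the side lengths `e^u`, `e^v`, `1`. -/
theorem amoeba_of_line (u v : ℝ) :
    (∃ x y : ℂ, x ≠ 0 ∧ y ≠ 0 ∧ x + y = 1 ∧
        Real.log ‖x‖ = u ∧ Real.log ‖y‖ = v)
    ↔ (exp u ≤ exp v + 1 ∧ exp v ≤ exp u + 1 ∧ 1 ≤ exp u + exp v) := by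
  constructor
  · rintro ⟨x, y, hx, hy, hxy, rfl, rfl⟩
    rw [exp_log (norm_pos_iff.2 hx), exp_log (norm_pos_iff.2 hy)]
    simpa using norm_le_of_add_eq hxy
  · rintro ⟨huv, hvu, h1⟩
    obtain ⟨z, hz, hz'⟩ := Complex.exists_norm_eq_norm_one_sub_eq huv hvu h1
    refine ⟨z, 1 - z, ?_, ?_, add_sub_cancel z 1, by rw [hz, log_exp], by rw [hz', log_exp]⟩
    · exact norm_ne_zero_iff.1 (hz ▸ (exp_pos u).ne')
    · exact norm_ne_zero_iff.1 (hz' ▸ (exp_pos v).ne')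
end

section
/- The Lebesgue measure of the set {(u,v) ∈ ℝ² : exp u ≤ exp v + 1 ∧ exp v ≤ exp u + 1 ∧ 1 ≤ exp u + exp v} equals π²/2. -/
/-!
By Fubini, the area is the integral over `u` of the length of the vertical slice, which is the
interval `[log |eᵘ - 1|, log (eᵘ + 1)]`. With `t = e^{-|u|}` its length is
`log ((1 + t) / (1 - t)) = 2 ∑ t^(2m+1) / (2m+1)`, and integrating termwise,
`∫ e^{-(2m+1)|u|} du = 2 / (2m+1)`, gives `4 ∑ 1 / (2m+1)² = π² / 2`: the odd terms make up
three quarters of Euler's `ζ(2) = π² / 6`.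
-/

open Real MeasureTheory Set

theorem hasSum_one_div_odd_sq :
    HasSum (fun m : ℕ => 1 / (2 * (m : ℝ) + 1) ^ 2) (π ^ 2 / 8) := by
  set f : ℕ → ℝ := fun n => 1 / (n : ℝ) ^ 2
  have hodd : Summable fun m => f (2 * m + 1) :=
    hasSum_zeta_two.summable.comp_injective fun a b h => by simpa using h
  have heven : HasSum (fun m => f (2 * m)) (1 / 4 * (π ^ 2 / 6)) :=
    (hasSum_zeta_two.mul_left (1 / 4)).congr_fun fun m => by
      simp only [f]; push_cast; ring
  have htotal := (heven.even_add_odd hodd.hasSum).unique hasSum_zeta_two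
  convert hodd.hasSum using 1
  · ext m; simp only [f]; push_cast; rfl
  · linarith

theorem integrable_exp_neg_mul_abs {k : ℝ} (hk : 0 < k) :
    Integrable fun u : ℝ => exp (-k * |u|) := by
  rw [← integrableOn_univ, ← Iic_union_Ioi (a := 0)]
  refine IntegrableOn.union ?_ ?_
  · refine (integrableOn_exp_mul_Iic hk 0).congr_fun (fun u hu => ?_) measurableSet_Iic
    rw [abs_of_nonpos hu]; ring_nf
  · refine (integrableOn_exp_mul_Ioi (neg_neg_of_pos hk) 0).congr_fun (fun u hu => ?_)
      measurableSet_Ioi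
    rw [abs_of_pos hu]

theorem integral_exp_neg_mul_abs {k : ℝ} (hk : 0 < k) :
    ∫ u : ℝ, exp (-k * |u|) = 2 / k := by
  rw [integral_comp_abs (f := fun u => exp (-k * u)), integral_exp_mul_Ioi (neg_neg_of_pos hk),
    mul_zero, exp_zero]
  field_simp

theorem lintegral_ofReal_const_mul_exp_neg_mul_abs {c k : ℝ} (hc : 0 ≤ c) (hk : 0 < k) :
    ∫⁻ u : ℝ, ENNReal.ofReal (c * exp (-k * |u|)) = ENNReal.ofReal (c * (2 / k)) := by
  rw [← ofReal_integral_eq_lintegral_ofReal ((integrable_exp_neg_mul_abs hk).const_mul c)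
      (ae_of_all _ fun u => by positivity), integral_const_mul, integral_exp_neg_mul_abs hk]

/-- `(log |x|, log |y|)` with `x + y = 1` are exactly the points where `|x|`, `|y|` and `1`
satisfy the triangle inequalities. -/
def lineAmoeba : Set (ℝ × ℝ) :=
  {p | exp p.1 ≤ exp p.2 + 1 ∧ exp p.2 ≤ exp p.1 + 1 ∧ 1 ≤ exp p.1 + exp p.2}

theorem isClosed_lineAmoeba : IsClosed lineAmoeba := by
  simp only [lineAmoeba, ofPred_and]
  exact (isClosed_le (by fun_prop) (by fun_prop)).inter
    ((isClosed_le (by fun_prop) (by fun_prop)).inter (isClosed_le (by fun_prop) (by fun_prop)))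

theorem abs_exp_sub_one_pos {u : ℝ} (hu : u ≠ 0) : 0 < |exp u - 1| :=
  abs_pos.mpr (sub_ne_zero.mpr ((exp_eq_one_iff u).not.mpr hu))

theorem lineAmoeba_slice {u : ℝ} (hu : u ≠ 0) :
    Prod.mk u ⁻¹' lineAmoeba = Icc (log |exp u - 1|) (log (exp u + 1)) := by
  ext v
  simp only [lineAmoeba, mem_preimage, mem_ofPred_eq, mem_Icc]
  rw [log_le_iff_le_exp (abs_exp_sub_one_pos hu), le_log_iff_exp_le (by positivity),
    abs_sub_le_iff]
  constructor
  · rintro ⟨h₁, h₂, h₃⟩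
    exact ⟨⟨by linarith, by linarith⟩, h₂⟩
  · rintro ⟨⟨h₁, h₂⟩, h₃⟩
    exact ⟨by linarith, h₃, by linarith⟩

theorem exp_add_one_div_abs_exp_sub_one {u : ℝ} (hu : u ≠ 0) :
    (exp u + 1) / |exp u - 1| = (1 + exp (-|u|)) / (1 - exp (-|u|)) := by
  rcases hu.lt_or_gt with hneg | hpos
  · rw [abs_of_neg hneg, neg_neg, abs_of_neg (by simpa using exp_lt_one_iff.mpr hneg)]
    ring
  · have hexp : 1 < exp u := one_lt_exp_iff.mpr hpos
    rw [abs_of_pos hpos, abs_of_pos (by linarith), exp_neg]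
    field_simp

theorem hasSum_log_exp_add_one_sub_log_abs_exp_sub_one {u : ℝ} (hu : u ≠ 0) :
    HasSum (fun m : ℕ => 2 / (2 * m + 1) * exp (-(2 * m + 1) * |u|))
      (log (exp u + 1) - log |exp u - 1|) := by
  have ht : exp (-|u|) < 1 := exp_lt_one_iff.mpr (neg_neg_of_pos (abs_pos.mpr hu))
  have hseries :=
    hasSum_log_sub_log_of_abs_lt_one (abs_lt.mpr ⟨by linarith [exp_pos (-|u|)], ht⟩)
  rw [← log_div (by positivity) (by linarith), ← exp_add_one_div_abs_exp_sub_one hu,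
    log_div (by positivity) (abs_exp_sub_one_pos hu).ne'] at hseries
  refine hseries.congr_fun fun m => ?_
  rw [← exp_nat_mul]
  push_cast
  ring_nf

/-- The area of the amoeba of the line `x + y = 1` in `(ℂ*)²` equals `π²/2`. -/
theorem area_amoeba_of_line :
    volume {p : ℝ × ℝ | exp p.1 ≤ exp p.2 + 1 ∧ exp p.2 ≤ exp p.1 + 1 ∧ 1 ≤ exp p.1 + exp p.2}
      = ENNReal.ofReal (π ^ 2 / 2) := by
  have hslices : ∀ᵐ u : ℝ, volume (Prod.mk u ⁻¹' lineAmoeba)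
      = ∑' m : ℕ, ENNReal.ofReal (2 / (2 * m + 1) * exp (-(2 * m + 1) * |u|)) := by
    filter_upwards [Measure.ae_ne volume 0] with u hu
    have hs := hasSum_log_exp_add_one_sub_log_abs_exp_sub_one hu
    rw [lineAmoeba_slice hu, volume_Icc, ← hs.tsum_eq,
      ENNReal.ofReal_tsum_of_nonneg (fun m => by positivity) hs.summable]
  have hsum : HasSum (fun m : ℕ => 2 / (2 * m + 1) * (2 / (2 * m + 1) : ℝ)) (π ^ 2 / 2) := by
    rw [show π ^ 2 / 2 = 4 * (π ^ 2 / 8) by ring]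
    exact (hasSum_one_div_odd_sq.mul_left 4).congr_fun fun m => by field_simp; ring
  change volume lineAmoeba = _
  rw [Measure.volume_eq_prod, Measure.prod_apply isClosed_lineAmoeba.measurableSet,
    lintegral_congr_ae hslices, lintegral_tsum fun m => by fun_prop,
    tsum_congr fun m => lintegral_ofReal_const_mul_exp_neg_mul_abs (by positivity) (by positivity),
    ← ENNReal.ofReal_tsum_of_nonneg (fun m => by positivity) hsum.summable, hsum.tsum_eq]
end

section
/- The Lebesgue measure of the set {(u,v) ∈ ℝ² : u < 0 ∧ v < 0 ∧ exp u + exp v > 1} equals π²/6. -/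
/-!
For fixed `u < 0` the section of the set is the interval `log (1 - eᵘ) < v < 0`, of length
`-log (1 - eᵘ)`.
Expanding `-log (1 - x) = ∑ xⁿ⁺¹ / (n + 1)` at `x = eᵘ` and integrating term by term gives
`∑ 1 / (n + 1)² = ζ(2) = π² / 6`.
-/

open Real MeasureTheory Set

lemma setOf_exp_add_exp_gt_one_eq_regionBetween :
    {p : ℝ × ℝ | p.1 < 0 ∧ p.2 < 0 ∧ exp p.1 + exp p.2 > 1}
      = regionBetween (fun u => log (1 - exp u)) 0 (Iio 0) := by
  ext ⟨u, v⟩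
  simp only [regionBetween, mem_ofPred_eq, mem_Iio, mem_Ioo, Pi.zero_apply]
  refine and_congr_right fun hu => ?_
  have hpos : 0 < 1 - exp u := sub_pos.mpr (exp_lt_one_iff.mpr hu)
  rw [log_lt_iff_lt_exp hpos]
  constructor
  · rintro ⟨hv, h⟩
    exact ⟨by linarith, hv⟩
  · rintro ⟨h, hv⟩
    exact ⟨hv, by linarith⟩

lemma ofReal_neg_log_one_sub_eq_tsum {x : ℝ} (hx₀ : 0 ≤ x) (hx₁ : x < 1) :
    ENNReal.ofReal (-log (1 - x)) = ∑' n : ℕ, ENNReal.ofReal (x ^ (n + 1) / (n + 1)) := by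
  have hs := hasSum_pow_div_log_of_abs_lt_one (abs_lt.mpr ⟨by linarith, hx₁⟩)
  rw [← hs.tsum_eq, ENNReal.ofReal_tsum_of_nonneg (fun n => by positivity) hs.summable]

lemma lintegral_Iio_zero_exp_pow_div (n : ℕ) :
    ∫⁻ u in Iio 0, ENNReal.ofReal (exp u ^ (n + 1) / (n + 1))
      = ENNReal.ofReal (1 / ((n : ℝ) + 1) ^ 2) := by
  have ha : (0 : ℝ) < n + 1 := by positivity
  have hpow (u : ℝ) : exp u ^ (n + 1) = exp ((n + 1) * u) := by
    rw [← exp_nat_mul]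
    push_cast
    rfl
  simp_rw [hpow]
  rw [setLIntegral_congr Iio_ae_eq_Iic,
    ← ofReal_integral_eq_lintegral_ofReal ((integrableOn_exp_mul_Iic ha 0).div_const _)
      (ae_of_all _ fun _ => by positivity),
    integral_div, integral_exp_mul_Iic ha, mul_zero, exp_zero]
  congr 1
  field_simp

lemma hasSum_one_div_nat_succ_sq :
    HasSum (fun n : ℕ => 1 / ((n : ℝ) + 1) ^ 2) (π ^ 2 / 6) := by
  have := (hasSum_nat_add_iff (f := fun n : ℕ => 1 / (n : ℝ) ^ 2) 1).mpr
    (by simpa using hasSum_zeta_two)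
  simpa using this

/-- The area of the part of the amoeba of the line `x + y = 1` lying in the negative quadrant
equals `π²/6` (Passare's proof of `ζ(2) = π²/6`). -/
theorem area_amoeba_negative_quadrant :
    volume {p : ℝ × ℝ | p.1 < 0 ∧ p.2 < 0 ∧ exp p.1 + exp p.2 > 1}
      = ENNReal.ofReal (π ^ 2 / 6) := by
  have hheight : ∀ u ∈ Iio (0 : ℝ), ENNReal.ofReal ((0 - fun u => log (1 - exp u)) u)
      = ∑' n : ℕ, ENNReal.ofReal (exp u ^ (n + 1) / (n + 1)) := fun u hu => by
    rw [Pi.sub_apply, Pi.zero_apply, zero_sub]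
    exact ofReal_neg_log_one_sub_eq_tsum (exp_pos u).le (exp_lt_one_iff.mpr hu)
  rw [setOf_exp_add_exp_gt_one_eq_regionBetween, Measure.volume_eq_prod,
    volume_regionBetween_eq_lintegral (by fun_prop) (by fun_prop) measurableSet_Iio,
    setLIntegral_congr_fun measurableSet_Iio hheight, lintegral_tsum (fun n => by fun_prop),
    tsum_congr lintegral_Iio_zero_exp_pow_div,
    ← ENNReal.ofReal_tsum_of_nonneg (fun n => by positivity) hasSum_one_div_nat_succ_sq.summable,
    hasSum_one_div_nat_succ_sq.tsum_eq]
end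

section
/- (Global tropical Menelaus / Corollary.) Let V be a finite type with a map P : V → ℝ² (vertex positions), and let d : V → V → ℝ² satisfy d a b = − d b a for all a, b, and the parallelism condition (P b − P a)₁·(d a b)₂ − (P b − P a)₂·(d a b)₁ = 0 for all a, b (bounded-edge direction vectors are parallel to the segment joining their endpoints). Let ι be a finite type with maps s : ι → V and u : ι → ℝ² (unbounded edges attached at vertex s i with direction u i). Assume the balancing condition at every vertex a ∈ V: (Σ_{b ∈ V} d a b) + Σ_{i : s i = a} u i = 0. Then the total momentum of the unbounded edges vanishes: Σ_{i ∈ ι} [(P (s i))₁·(u i)₂ − (P (s i))₂·(u i)₁] = 0. -/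
/-!
Applying the linear form `momentum (P a)` to the balancing condition at `a` gives the vertex-wise
Menelaus identity. Summed over all vertices, the leaf terms add up to the total leaf momentum,
while the bounded edge between `a` and `b` contributes
`momentum (P a) (d a b) + momentum (P b) (d b a)`, which vanishes: `d b a = - d a b`, and by
parallelism `d a b` has the same momentum about `P a` as about `P b`.
-/

open Finset

namespace TropicalMenelaus

variable {R : Type*} [CommRing R]

def momentum (p : R × R) : R × R →ₗ[R] R :=
  p.1 • LinearMap.snd R R R - p.2 • LinearMap.fst R R R

@[simp]
theorem momentum_apply (p u : R × R) : momentum p u = p.1 * u.2 - p.2 * u.1 := rfl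

theorem momentum_sub_left (p q u : R × R) :
    momentum (q - p) u = momentum q u - momentum p u := by
  simp only [momentum_apply, Prod.fst_sub, Prod.snd_sub]
  ring

theorem momentum_eq_of_parallel {p q u : R × R} (h : momentum (q - p) u = 0) :
    momentum p u = momentum q u := by
  rw [momentum_sub_left, sub_eq_zero] at h
  exact h.symm

theorem momentum_antisymm_of_parallel {V : Type*} {P : V → R × R} {d : V → V → R × R}
    (hanti : ∀ a b, d a b = - d b a) (hpar : ∀ a b, momentum (P b - P a) (d a b) = 0) (a b : V) :
    momentum (P a) (d a b) = - momentum (P b) (d b a) := by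
  rw [momentum_eq_of_parallel (hpar a b), hanti, map_neg]

end TropicalMenelaus

theorem Finset.sum_sum_eq_zero_of_antisymm {α M : Type*} [AddCommGroup M] [IsAddTorsionFree M]
    (s : Finset α) {f : α → α → M} (hf : ∀ a b, f a b = - f b a) :
    ∑ a ∈ s, ∑ b ∈ s, f a b = 0 := by
  refine self_eq_neg.mp ?_
  calc ∑ a ∈ s, ∑ b ∈ s, f a b
      = ∑ a ∈ s, ∑ b ∈ s, f b a := Finset.sum_comm
    _ = ∑ a ∈ s, ∑ b ∈ s, - f a b := sum_congr rfl fun a _ => sum_congr rfl fun b _ => hf b a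
    _ = - ∑ a ∈ s, ∑ b ∈ s, f a b := by simp only [sum_neg_distrib]

open TropicalMenelaus

/-- Global tropical Menelaus theorem: if the bounded-edge direction vectors `d a b` are
antisymmetric and parallel to the segments joining the vertex positions, and the balancing
condition holds at every vertex, then the total momentum of the unbounded edges vanishes. -/
theorem tropical_menelaus_global {V : Type*} [Fintype V] [DecidableEq V]
    (P : V → ℝ × ℝ) (d : V → V → ℝ × ℝ)
    (hanti : ∀ a b, d a b = - d b a)
    (hpar : ∀ a b, (P b - P a).1 * (d a b).2 - (P b - P a).2 * (d a b).1 = 0)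
    {ι : Type*} [Fintype ι] (s : ι → V) (u : ι → ℝ × ℝ)
    (hbal : ∀ a : V, (∑ b, d a b) + (∑ i ∈ Finset.univ.filter (fun i => s i = a), u i) = 0) :
    ∑ i, ((P (s i)).1 * (u i).2 - (P (s i)).2 * (u i).1) = 0 := by
  have vertex (a : V) : ∑ i with s i = a, momentum (P (s i)) (u i) =
      - ∑ b, momentum (P a) (d a b) := by
    have h := congrArg (momentum (P a)) (hbal a)
    rw [map_add, map_zero, map_sum, map_sum] at h
    rw [neg_eq_of_add_eq_zero_right h]
    exact sum_congr rfl fun i hi => by rw [(mem_filter.mp hi).2]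
  calc ∑ i, ((P (s i)).1 * (u i).2 - (P (s i)).2 * (u i).1)
      = ∑ a, ∑ i with s i = a, momentum (P (s i)) (u i) := (sum_fiberwise _ s _).symm
    _ = - ∑ a, ∑ b, momentum (P a) (d a b) := by simp only [vertex, sum_neg_distrib]
    _ = 0 := by
      rw [sum_sum_eq_zero_of_antisymm _ (momentum_antisymm_of_parallel hanti hpar), neg_zero]
end

section
/- Let n be a positive integer and v : ZMod n → ℤ × ℤ a closed lattice polygonal path (the vertices, indexed cyclically). Then the shoelace sum Σ_i [(v i)₁·(v (i+1))₂ − (v i)₂·(v (i+1))₁], which equals twice the signed area enclosed by the path, is congruent modulo 2 to Σ_i Int.gcd((v (i+1))₁ − (v i)₁, (v (i+1))₂ − (v i)₂), the number of lattice points on the boundary counted along the edges. -/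
/-!
Modulo 2, `gcd a b ≡ a + b + a * b`, because `gcd a b` is even exactly when `a` and `b` both are.
For an edge from `p` to `q` this expands to `gcd (q - p) ≡ det (p, q) + g q - g p`, where
`g p = gcd p.1 p.2`; summed around the closed path, the `g`-terms telescope away.
-/

theorem Int.gcd_cast_zmod_two (a b : ℤ) : (Int.gcd a b : ZMod 2) = a + b + a * b := by
  have hg : (Int.gcd a b : ZMod 2) = 0 ↔ (a : ZMod 2) = 0 ∧ (b : ZMod 2) = 0 := by
    simp only [ZMod.natCast_eq_zero_iff, ZMod.intCast_zmod_eq_zero_iff_dvd, Int.dvd_gcd_iff]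
  generalize (Int.gcd a b : ZMod 2) = g, (a : ZMod 2) = x, (b : ZMod 2) = y at hg ⊢
  revert g x y
  decide

theorem Int.gcd_sub_cast_zmod_two (p q : ℤ × ℤ) :
    (Int.gcd (q.1 - p.1) (q.2 - p.2) : ZMod 2) =
      ((p.1 * q.2 - p.2 * q.1 : ℤ) : ZMod 2) + (Int.gcd q.1 q.2 - Int.gcd p.1 p.2) := by
  simp only [Int.gcd_cast_zmod_two]
  push_cast
  linear_combination (p.1 * p.2 - p.1 * q.2 : ZMod 2) * (by decide : (2 : ZMod 2) = 0)

theorem Fintype.sum_sub_comp_add_right {G M : Type*} [AddGroup G] [Fintype G]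
    [AddCommGroup M] (f : G → M) (a : G) : ∑ i, (f (i + a) - f i) = 0 := by
  rw [Finset.sum_sub_distrib, sub_eq_zero]
  exact Equiv.sum_comp (Equiv.addRight a) f

/-- For a closed lattice polygonal path, the shoelace sum (twice the signed enclosed area)
is congruent mod 2 to the number of lattice points counted along the boundary edges. -/
theorem shoelace_parity (n : ℕ) [NeZero n] (v : ZMod n → ℤ × ℤ) :
    (∑ i : ZMod n, ((v i).1 * (v (i + 1)).2 - (v i).2 * (v (i + 1)).1)) ≡
      (∑ i : ZMod n,
        (Int.gcd ((v (i + 1)).1 - (v i).1) ((v (i + 1)).2 - (v i).2) : ℤ)) [ZMOD 2] := by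
  refine (ZMod.intCast_eq_intCast_iff _ _ 2).mp ?_
  have htelescope :=
    Fintype.sum_sub_comp_add_right (fun i ↦ (Int.gcd (v i).1 (v i).2 : ZMod 2)) 1
  simp only [Int.cast_sum, Int.cast_natCast, Int.gcd_sub_cast_zmod_two, Finset.sum_add_distrib,
    htelescope, add_zero]
end
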